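/- arXiv:2604.26992 — 5 statements merged into one kernel-verified Lean document; each statement's English description precedes it below -/
import Mathlib

section
/- Fix δ ∈ (0,1/4) and εmax ∈ (0,1/2). There exists a constant c > 0 depending only on δ and εmax such that the following holds for every integer n ≥ 2 and every σ > 0. Let (l,u) be any confidence-interval procedure on n samples and r : [0,εmax] → (0,∞) any function such that for all θ ∈ ℝ, all ε ∈ [0,εmax], and all probability measures Q on ℝ: (coverage over Huber's model) H_{θ,σ,ε,Q}^{⊗n}( {x : l(x) ≤ θ ≤ u(x)} ) ≥ 1 − δ, where H_{θ,σ,ε,Q} = (1−ε)·N(θ,σ²) + ε·Q; and (length over Efron's model) P_{θ,σ,ε,Q}^{⊗n}( {x : u(x) − l(x) ≤ r(ε)} ) ≥ 1 − δ. Then r(ε) ≥ c·σ/√(log n) for every ε ∈ [0,εmax]. -/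
open MeasureTheory ProbabilityTheory Real
open scoped ENNReal NNReal

/-- Gaussian measure on `ℝ` with mean `m` and variance `v`. -/
noncomputable def gauss (m v : ℝ) : Measure ℝ := gaussianReal m (Real.toNNReal v)

/-- Efron's Gaussian two-groups model:
`(1-ε)·N(θ,σ²) + ε·(Q ∗ N(0,σ²))`. -/
noncomputable def efron (θ σ ε : ℝ) (Q : Measure ℝ) : Measure ℝ :=
  (ENNReal.ofReal (1 - ε)) • gauss θ (σ ^ 2) +
    (ENNReal.ofReal ε) • (Measure.conv Q (gauss 0 (σ ^ 2)))

/-- The `n`-fold product (i.i.d.) measure on `ℝⁿ`. -/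
noncomputable def iid (n : ℕ) (P : Measure ℝ) : Measure (Fin n → ℝ) :=
  Measure.pi fun _ => P

/-- Huber's contamination model: `(1-ε)·N(θ,σ²) + ε·Q`. -/
noncomputable def huber (θ σ ε : ℝ) (Q : Measure ℝ) : Measure ℝ :=
  (ENNReal.ofReal (1 - ε)) • gauss θ (σ ^ 2) + (ENNReal.ofReal ε) • Q

/-!
Spend the contamination budget to make a model centred at `0` look like `N(m, σ²)` with
`m = c σ / √(log n)`: take `Q` proportional to the positive part of `φₘ - (1 - ε) φ₀`. The Huber
density `(1 - ε) φ₀ + ε Q` is then at most `φₘ + g` with `g = ((1 - ε) φ₀ - φₘ)₊`, which lives left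
of the crossing point `t ≈ -4σ√(log n)` of the two curves and so has mass at most
`exp (-t² / 2σ²) ≤ 1 / (8n)`. Hence the `n`-fold products differ by at most
`(1 + 1 / (8n))ⁿ - 1 ≤ 1 / 4` on every event.

`N(m, σ²)` is also a Huber model (`ε = 0`) and an Efron model (`Q = δₘ`). Under `N(m, σ²)ⁿ` the
interval therefore covers `m`, covers `0` and has length at most `r ε`, each with probability at
least `1 - δ` (the second up to `1 / 4`). As `3δ + 1 / 4 < 1`, all three happen at once, which
forces `m ≤ r ε`.
-/

instance (m v : ℝ) : IsProbabilityMeasure (gauss m v) := by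
  unfold gauss; infer_instance

instance (n : ℕ) (P : Measure ℝ) [IsFiniteMeasure P] : IsFiniteMeasure (iid n P) := by
  unfold iid; infer_instance

instance (n : ℕ) (P : Measure ℝ) [IsProbabilityMeasure P] : IsProbabilityMeasure (iid n P) := by
  unfold iid; infer_instance

instance (θ σ ε : ℝ) (Q : Measure ℝ) [IsFiniteMeasure Q] : IsFiniteMeasure (huber θ σ ε Q) := by
  have := (gauss θ (σ ^ 2)).smul_finite (ENNReal.ofReal_ne_top (r := 1 - ε))
  have := Q.smul_finite (ENNReal.ofReal_ne_top (r := ε))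
  unfold huber
  infer_instance

lemma gauss_eq_withDensity (m : ℝ) {σ : ℝ} (hσ : σ ≠ 0) :
    gauss m (σ ^ 2) = volume.withDensity (gaussianPDF m (σ ^ 2).toNNReal) :=
  gaussianReal_of_var_ne_zero m (by positivity)

lemma huber_zero (θ σ : ℝ) (Q : Measure ℝ) : huber θ σ 0 Q = gauss θ (σ ^ 2) := by
  simp [huber]

lemma efron_dirac_self (θ σ : ℝ) {ε : ℝ} (hε₀ : 0 ≤ ε) (hε₁ : ε ≤ 1) :
    efron θ σ ε (Measure.dirac θ) = gauss θ (σ ^ 2) := by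
  have hconv : Measure.dirac θ ∗ gauss 0 (σ ^ 2) = gauss θ (σ ^ 2) := by
    rw [gauss, gauss, ← gaussianReal_zero_var, gaussianReal_conv_gaussianReal, add_zero, zero_add]
  rw [efron, hconv, ← add_smul, ← ENNReal.ofReal_add (by linarith) hε₀, sub_add_cancel,
    ENNReal.ofReal_one, one_smul]

lemma le_measureReal_of_ofReal_le {Ω : Type*} [MeasurableSpace Ω] {μ : Measure Ω}
    [IsFiniteMeasure μ] {s : Set Ω} {a : ℝ} (h : ENNReal.ofReal a ≤ μ s) : a ≤ μ.real s :=
  (ENNReal.ofReal_le_iff_le_toReal (measure_ne_top μ s)).1 h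

lemma nonempty_inter_inter_of_two_lt {Ω : Type*} [MeasurableSpace Ω] {P : Measure Ω}
    [IsProbabilityMeasure P] {A B C : Set Ω} (hB : MeasurableSet B) (hC : MeasurableSet C)
    (h : 2 < P.real A + P.real B + P.real C) : (A ∩ B ∩ C).Nonempty := by
  by_contra hABC
  rw [Set.not_nonempty_iff_eq_empty] at hABC
  have hAB := measureReal_union_add_inter (μ := P) (s := A) hB
  have hABC' := measureReal_union_add_inter (μ := P) (s := A ∩ B) hC
  rw [hABC, measureReal_empty] at hABC'
  linarith [measureReal_le_one (μ := P) (s := A ∪ B), measureReal_le_one (μ := P) (s := A ∩ B ∪ C)]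

lemma abs_sub_le_of_coverage {Ω : Type*} [MeasurableSpace Ω] (P : Measure Ω)
    [IsProbabilityMeasure P] {l u : Ω → ℝ} (hl : Measurable l) (hu : Measurable u)
    {θ₀ θ₁ r a b c : ℝ} (h₀ : a ≤ P.real {x | l x ≤ θ₀ ∧ θ₀ ≤ u x})
    (h₁ : b ≤ P.real {x | l x ≤ θ₁ ∧ θ₁ ≤ u x}) (hr : c ≤ P.real {x | u x - l x ≤ r})
    (habc : 2 < a + b + c) : |θ₁ - θ₀| ≤ r := by
  have hcov (θ : ℝ) : MeasurableSet {x | l x ≤ θ ∧ θ ≤ u x} :=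
    (measurableSet_le hl measurable_const).inter (measurableSet_le measurable_const hu)
  obtain ⟨x, ⟨⟨hl₀, hu₀⟩, ⟨hl₁, hu₁⟩⟩, hx⟩ :=
    nonempty_inter_inter_of_two_lt (A := {x | l x ≤ θ₀ ∧ θ₀ ≤ u x}) (hcov θ₁)
      (measurableSet_le (hu.sub hl) measurable_const : MeasurableSet {x | u x - l x ≤ r})
      (by linarith)
  exact abs_sub_le_iff.2 ⟨by linarith [hx.out], by linarith [hx.out]⟩

section Product

variable {E : Type*} [MeasurableSpace E] (μ : Measure E) [SigmaFinite μ]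

lemma lintegral_pi_fin_prod {n : ℕ} {f : Fin n → E → ℝ≥0∞} (hf : ∀ i, Measurable (f i)) :
    ∫⁻ x, ∏ i, f i (x i) ∂(Measure.pi fun _ => μ) = ∏ i, ∫⁻ y, f i y ∂μ := by
  induction n with
  | zero => simp
  | succ n ih =>
    calc
      _ = ∫⁻ p : E × (Fin n → E), f 0 p.1 * ∏ i : Fin n, f i.succ (p.2 i)
            ∂(μ.prod (Measure.pi fun _ => μ)) := by
        rw [← (measurePreserving_piFinSuccAbove (fun _ => μ) 0).symm.lintegral_comp_emb
          (MeasurableEquiv.measurableEmbedding _)]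
        congr 1 with p
        simp [Fin.prod_univ_succ, MeasurableEquiv.piFinSuccAbove_symm_apply, Fin.insertNthEquiv]
      _ = (∫⁻ y, f 0 y ∂μ) * ∫⁻ x, ∏ i : Fin n, f i.succ (x i) ∂(Measure.pi fun _ => μ) :=
        lintegral_prod_mul (hf 0).aemeasurable
          (Finset.measurable_prod _ fun i _ => (hf _).comp (measurable_pi_apply i)).aemeasurable
      _ = _ := by rw [ih fun i => hf _, Fin.prod_univ_succ]

lemma pi_withDensity {n : ℕ} {f : Fin n → E → ℝ≥0∞} (hf : ∀ i, Measurable (f i))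
    [∀ i, SigmaFinite (μ.withDensity (f i))] :
    Measure.pi (fun i => μ.withDensity (f i)) =
      (Measure.pi fun _ => μ).withDensity fun x => ∏ i, f i (x i) := by
  refine Measure.pi_eq fun s hs => ?_
  have hind : (Set.univ.pi s).indicator (fun x => ∏ i, f i (x i)) =
      fun x => ∏ i, (s i).indicator (f i) (x i) := by
    funext x
    classical
    simp only [Set.indicator_apply, Set.mem_univ_pi]
    split_ifs with hx
    · exact Finset.prod_congr rfl fun i _ => (if_pos (hx i)).symm
    · obtain ⟨i, hi⟩ := not_forall.1 hx
      exact (Finset.prod_eq_zero (Finset.mem_univ i) (if_neg hi)).symm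
  rw [withDensity_apply _ (.univ_pi hs), ← lintegral_indicator (.univ_pi hs), hind,
    lintegral_pi_fin_prod μ fun i => (hf i).indicator (hs i)]
  exact Finset.prod_congr rfl fun i _ => by
    rw [lintegral_indicator (hs i), withDensity_apply _ (hs i)]

lemma pi_apply_le_add_of_withDensity {n : ℕ} {ν ρ : Measure E} [SigmaFinite ν] [SigmaFinite ρ]
    {d p g : E → ℝ≥0∞} (hd : Measurable d) (hp : Measurable p) (hg : Measurable g)
    (hν : ν = μ.withDensity d) (hρ : ρ = μ.withDensity p) (hdpg : ∀ x, d x ≤ p x + g x)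
    (hp_one : ∫⁻ x, p x ∂μ = 1) (S : Set (Fin n → E)) :
    Measure.pi (fun _ => ν) S ≤ Measure.pi (fun _ => ρ) S + ((1 + ∫⁻ x, g x ∂μ) ^ n - 1) := by
  subst hν hρ
  set P : (Fin n → E) → ℝ≥0∞ := fun x => ∏ i, p (x i)
  set Ψ : (Fin n → E) → ℝ≥0∞ := fun x => ∏ i, (p (x i) + g (x i))
  have hP : Measurable P := Finset.measurable_prod _ fun i _ => hp.comp (measurable_pi_apply i)
  have hPΨ : P ≤ Ψ := fun x => Finset.prod_le_prod' fun i _ => le_self_add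
  have hP_one : ∫⁻ x, P x ∂(Measure.pi fun _ => μ) = 1 := by
    simp [P, lintegral_pi_fin_prod μ fun _ => hp, hp_one]
  have hΨ : ∫⁻ x, Ψ x ∂(Measure.pi fun _ => μ) = (1 + ∫⁻ x, g x ∂μ) ^ n := by
    rw [lintegral_pi_fin_prod μ (f := fun _ y => p y + g y) fun _ => hp.add hg]
    simp [lintegral_add_left hp, hp_one]
  have hΨP : ∫⁻ x, (Ψ x - P x) ∂(Measure.pi fun _ => μ) = (1 + ∫⁻ x, g x ∂μ) ^ n - 1 := by
    rw [lintegral_sub hP (by simp [hP_one]) (ae_of_all _ hPΨ), hΨ, hP_one]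
  rw [pi_withDensity μ fun _ => hd, pi_withDensity μ fun _ => hp, withDensity_apply',
    withDensity_apply', ← hΨP]
  calc ∫⁻ x in S, ∏ i, d (x i) ∂(Measure.pi fun _ => μ)
      ≤ ∫⁻ x in S, Ψ x ∂(Measure.pi fun _ => μ) :=
        lintegral_mono fun x => Finset.prod_le_prod' fun i _ => hdpg (x i)
    _ = ∫⁻ x in S, P x ∂(Measure.pi fun _ => μ) +
          ∫⁻ x in S, (Ψ x - P x) ∂(Measure.pi fun _ => μ) := by
        rw [← lintegral_add_left hP]
        exact lintegral_congr fun x => (add_tsub_cancel_of_le (hPΨ x)).symm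
    _ ≤ _ := add_le_add le_rfl (setLIntegral_le_lintegral _ _)

end Product

section GaussianExcess

variable {V : ℝ≥0} {a m t : ℝ}

-- `hmt` places `t` at the point where the curves `φₘ` and `a φ₀` cross.
lemma lt_of_gaussianPDFReal_lt_mul (hV : V ≠ 0) (ha : 0 < a) (hm : 0 < m)
    (hmt : 2 * m * t = m ^ 2 + 2 * V * log a) {x : ℝ}
    (h : gaussianPDFReal m V x < a * gaussianPDFReal 0 V x) : x < t := by
  have hV' : (0 : ℝ) < 2 * V := by positivity
  rw [gaussianPDFReal, gaussianPDFReal, mul_left_comm, ← exp_log ha, ← exp_add] at h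
  have h' := exp_lt_exp.1 (lt_of_mul_lt_mul_left h (by positivity))
  rw [add_div' _ _ _ hV'.ne', div_lt_div_iff_of_pos_right hV'] at h'
  nlinarith

lemma gaussianPDFReal_zero_le_of_le (ht : t ≤ 0) {x : ℝ} (hx : x ≤ t) :
    gaussianPDFReal 0 V x ≤ exp (-t ^ 2 / (2 * V)) * gaussianPDFReal t V x := by
  rw [gaussianPDFReal, gaussianPDFReal, mul_left_comm, ← exp_add, ← add_div]
  gcongr
  -- `x² = t² + (x - t)² + 2 t (x - t)` and `t (x - t) ≥ 0`
  nlinarith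

lemma max_sub_gaussianPDFReal_le (hV : V ≠ 0) (ha₀ : 0 < a) (ha₁ : a ≤ 1) (hm : 0 < m)
    (ht : t ≤ 0) (hmt : 2 * m * t = m ^ 2 + 2 * V * log a) (x : ℝ) :
    max (a * gaussianPDFReal 0 V x - gaussianPDFReal m V x) 0 ≤
      exp (-t ^ 2 / (2 * V)) * gaussianPDFReal t V x := by
  have hφ₀ := gaussianPDFReal_nonneg 0 V x
  have hφₘ := gaussianPDFReal_nonneg m V x
  have hbound := mul_nonneg (exp_pos (-t ^ 2 / (2 * V))).le (gaussianPDFReal_nonneg t V x)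
  refine max_le ?_ hbound
  rcases le_or_gt (a * gaussianPDFReal 0 V x) (gaussianPDFReal m V x) with h | h
  · linarith
  · have hx := (lt_of_gaussianPDFReal_lt_mul hV ha₀ hm hmt h).le
    nlinarith [gaussianPDFReal_zero_le_of_le (V := V) ht hx]

lemma lintegral_max_sub_gaussianPDFReal_le (hV : V ≠ 0) (ha₀ : 0 < a) (ha₁ : a ≤ 1)
    (hm : 0 < m) (ht : t ≤ 0) (hmt : 2 * m * t = m ^ 2 + 2 * V * log a) :
    ∫⁻ x, ENNReal.ofReal (max (a * gaussianPDFReal 0 V x - gaussianPDFReal m V x) 0) ≤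
      ENNReal.ofReal (exp (-t ^ 2 / (2 * V))) :=
  calc _ ≤ ∫⁻ x, ENNReal.ofReal (exp (-t ^ 2 / (2 * V))) * gaussianPDF t V x :=
        lintegral_mono fun x => by
          rw [gaussianPDF, ← ENNReal.ofReal_mul (exp_pos _).le]
          exact ENNReal.ofReal_le_ofReal (max_sub_gaussianPDFReal_le hV ha₀ ha₁ hm ht hmt x)
    _ = _ := by rw [lintegral_const_mul _ (measurable_gaussianPDF t V),
        lintegral_gaussianPDF_eq_one t hV, mul_one]

end GaussianExcess

lemma exists_huber_eq_withDensity_le {σ ε : ℝ} (hσ : σ ≠ 0) (hε₀ : 0 < ε) (hε₁ : ε < 1)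
    (m : ℝ) : ∃ Q : Measure ℝ, IsProbabilityMeasure Q ∧ ∃ d : ℝ → ℝ≥0∞, Measurable d ∧
      huber 0 σ ε Q = volume.withDensity d ∧
      ∀ x, d x ≤ gaussianPDF m (σ ^ 2).toNNReal x + ENNReal.ofReal (max ((1 - ε) *
        gaussianPDFReal 0 (σ ^ 2).toNNReal x - gaussianPDFReal m (σ ^ 2).toNNReal x) 0) := by
  set V := (σ ^ 2).toNNReal
  have hV : V ≠ 0 := by simp [V, hσ]
  set φ₀ := gaussianPDFReal 0 V
  set φₘ := gaussianPDFReal m V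
  set f : ℝ → ℝ := fun x => max (φₘ x - (1 - ε) * φ₀ x) 0
  have hf_meas : Measurable f := by fun_prop
  have hf_int : Integrable f :=
    (integrable_gaussianPDFReal m V).mono' hf_meas.aestronglyMeasurable (ae_of_all _ fun x => by
      rw [Real.norm_of_nonneg (le_max_right _ _)]
      exact max_le (by nlinarith [gaussianPDFReal_nonneg 0 V x]) (gaussianPDFReal_nonneg m V x))
  have hε_le : ε ≤ ∫ x, f x := by
    have hint := (integrable_gaussianPDFReal m V).sub
      ((integrable_gaussianPDFReal 0 V).const_mul (1 - ε))
    calc ε = ∫ x, (φₘ x - (1 - ε) * φ₀ x) := by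
          rw [integral_sub (integrable_gaussianPDFReal m V)
            ((integrable_gaussianPDFReal 0 V).const_mul _), integral_const_mul,
            integral_gaussianPDFReal_eq_one m hV, integral_gaussianPDFReal_eq_one 0 hV]
          ring
      _ ≤ ∫ x, f x := integral_mono hint hf_int fun x => le_max_left _ _
  set c := ∫ x, f x
  have hc : 0 < c := hε₀.trans_le hε_le
  refine ⟨volume.withDensity fun x => ENNReal.ofReal (f x / c), ⟨?_⟩,
    fun x => ENNReal.ofReal (1 - ε) * gaussianPDF 0 V x +
      ENNReal.ofReal ε * ENNReal.ofReal (f x / c),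
    by fun_prop, ?_, fun x => ?_⟩
  · rw [withDensity_apply _ .univ, Measure.restrict_univ, ← ofReal_integral_eq_lintegral_ofReal
      (hf_int.div_const c) (ae_of_all _ fun x => div_nonneg (le_max_right _ _) hc.le),
      integral_div, div_self hc.ne', ENNReal.ofReal_one]
  · rw [huber, gauss, gaussianReal_of_var_ne_zero 0 hV, ← withDensity_smul _ (by fun_prop),
      ← withDensity_smul _ (by fun_prop), ← withDensity_add_left (by fun_prop)]
    rfl
  · have hf_le : ε * (f x / c) ≤ f x := by
      rw [mul_div_left_comm]
      exact mul_le_of_le_one_right (le_max_right _ _) ((div_le_one hc).2 hε_le)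
    have hsplit : (1 - ε) * φ₀ x + f x = φₘ x + max ((1 - ε) * φ₀ x - φₘ x) 0 := by
      show (1 - ε) * φ₀ x + max (φₘ x - (1 - ε) * φ₀ x) 0 = _
      rcases le_total ((1 - ε) * φ₀ x) (φₘ x) with h | h
      · rw [max_eq_left (sub_nonneg.2 h), max_eq_right (sub_nonpos.2 h)]; ring
      · rw [max_eq_right (sub_nonpos.2 h), max_eq_left (sub_nonneg.2 h)]; ring
    simp only [gaussianPDF]
    rw [← ENNReal.ofReal_mul (by linarith), ← ENNReal.ofReal_mul hε₀.le,
      ← ENNReal.ofReal_add (mul_nonneg (by linarith) (gaussianPDFReal_nonneg _ _ _))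
        (mul_nonneg hε₀.le (div_nonneg (le_max_right _ _) hc.le)),
      ← ENNReal.ofReal_add (gaussianPDFReal_nonneg _ _ _) (le_max_right _ _)]
    exact ENNReal.ofReal_le_ofReal (by linarith)

lemma one_add_pow_sub_one_le {x : ℝ≥0∞} {K : ℝ} {n : ℕ} (hK₀ : 0 ≤ K)
    (hx : x ≤ ENNReal.ofReal K) (hnK : n * K ≤ 1 / 8) :
    (1 + x) ^ n - 1 ≤ ENNReal.ofReal (1 / 4) := by
  have hexp : (1 + K) ^ n ≤ 1 + 1 / 4 :=
    calc (1 + K) ^ n ≤ exp K ^ n := by gcongr; linarith [add_one_le_exp K]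
      _ = exp (n * K) := (exp_nat_mul K n).symm
      _ ≤ exp (1 / 8) := exp_le_exp.2 hnK
      _ ≤ 1 / (1 - 1 / 8) := exp_bound_div_one_sub_of_interval (by norm_num) (by norm_num)
      _ ≤ 1 + 1 / 4 := by norm_num
  rw [tsub_le_iff_left, ← ENNReal.ofReal_one, ← ENNReal.ofReal_add zero_le_one (by norm_num)]
  calc (ENNReal.ofReal 1 + x) ^ n ≤ ENNReal.ofReal ((1 + K) ^ n) := by
        rw [ENNReal.ofReal_pow (by linarith), ENNReal.ofReal_add zero_le_one hK₀]
        gcongr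
    _ ≤ _ := ENNReal.ofReal_le_ofReal hexp

lemma natCast_mul_exp_neg_le {n : ℕ} (hn : 2 ≤ n) {L : ℝ} (hL : L ≤ log 2) :
    L / (8 * √(log n)) ≤ 4 * √(log n) ∧
      n * exp (-(L / (8 * √(log n)) - 4 * √(log n)) ^ 2 / 2) ≤ 1 / 8 := by
  have hn' : (2 : ℝ) ≤ n := by exact_mod_cast hn
  have hlog2 : 0 < log 2 := log_pos one_lt_two
  have hlog_n : log 2 ≤ log n := log_le_log two_pos hn'
  have hy : 0 < √(log n) := sqrt_pos.2 (by linarith)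
  have hy2 : √(log n) ^ 2 = log n := sq_sqrt (by linarith)
  set y := √(log n)
  clear_value y
  rw [← hy2] at hlog_n
  have hLy : L / (8 * y) ≤ y / 8 := by
    rw [div_le_div_iff₀ (by positivity) (by norm_num)]
    nlinarith
  refine ⟨by linarith, ?_⟩
  have hlog8 : log 8 = 3 * log 2 := by
    rw [show (8 : ℝ) = 2 ^ 3 by norm_num, log_pow]; norm_num
  have hexponent : -(L / (8 * y) - 4 * y) ^ 2 / 2 ≤ -log (8 * n) := by
    rw [log_mul (by norm_num) (by positivity), hlog8, ← hy2]
    nlinarith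
  calc (n : ℝ) * exp (-(L / (8 * y) - 4 * y) ^ 2 / 2)
      ≤ n * exp (-log (8 * n)) := by gcongr
    _ = 1 / 8 := by rw [exp_neg, exp_log (by positivity)]; field_simp

lemma exists_contamination_iid_le {σ ε : ℝ} (hσ : 0 < σ) (hε₀ : 0 < ε) (hε : ε < 1 / 2)
    {n : ℕ} (hn : 2 ≤ n) : ∃ Q : Measure ℝ, IsProbabilityMeasure Q ∧ ∀ S : Set (Fin n → ℝ),
      (iid n (huber 0 σ ε Q)).real S ≤
        (iid n (gauss (-log (1 - ε) / 4 * σ / √(log n)) (σ ^ 2))).real S + 1 / 4 := by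
  set L := -log (1 - ε)
  have hL₀ : 0 < L := neg_pos.2 (log_neg (by linarith) (by linarith))
  have hL : L ≤ log 2 := by
    rw [← neg_le_neg_iff, neg_neg, ← log_inv]
    exact log_le_log (by norm_num) (by linarith)
  have hy : 0 < √(log n) := sqrt_pos.2 (log_pos (by exact_mod_cast hn))
  set m := L / 4 * σ / √(log n)
  set t := σ * (L / (8 * √(log n)) - 4 * √(log n))
  obtain ⟨hst, hK⟩ := natCast_mul_exp_neg_le hn hL
  have hV : ((σ ^ 2).toNNReal : ℝ) = σ ^ 2 := Real.coe_toNNReal _ (by positivity)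
  have hexp :
      -t ^ 2 / (2 * (σ ^ 2).toNNReal) = -(L / (8 * √(log n)) - 4 * √(log n)) ^ 2 / 2 := by
    rw [hV]; simp only [t]; field_simp
  have hmt : 2 * m * t = m ^ 2 + 2 * (σ ^ 2).toNNReal * log (1 - ε) := by
    rw [hV, show log (1 - ε) = -L by ring]; simp only [m, t]; field_simp; ring
  obtain ⟨Q, hQ, d, hd, hhuber, hdle⟩ :=
    exists_huber_eq_withDensity_le hσ.ne' hε₀ (by linarith) m
  refine ⟨Q, hQ, fun S => ?_⟩
  have hgap := lintegral_max_sub_gaussianPDFReal_le (by simpa using hσ.ne') (by linarith)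
    (by linarith) (by positivity) (mul_nonpos_of_nonneg_of_nonpos hσ.le (by linarith)) hmt
  rw [hexp] at hgap
  have hle : iid n (huber 0 σ ε Q) S ≤ iid n (gauss m (σ ^ 2)) S + ENNReal.ofReal (1 / 4) :=
    (pi_apply_le_add_of_withDensity volume hd (measurable_gaussianPDF _ _) (by fun_prop)
      hhuber (gauss_eq_withDensity m hσ.ne') hdle
      (lintegral_gaussianPDF_eq_one m (by simpa using hσ.ne')) S).trans
      (add_le_add le_rfl (one_add_pow_sub_one_le (exp_pos _).le hgap hK))
  have := ENNReal.toReal_mono (by finiteness) hle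
  rwa [ENNReal.toReal_add (measure_ne_top _ _) ENNReal.ofReal_ne_top,
    ENNReal.toReal_ofReal (by norm_num)] at this

/-- No adaptation between Huber's and Efron's models, known variance (Theorem 6.1, part 1):
any procedure with adaptive coverage over all Huber's models and length `r(ε)` over all
Efron's models must satisfy `r(ε) ≥ c·σ/√(log n)`. -/
theorem no_adaptation_known_variance (δ εmax : ℝ)
    (hδ : δ ∈ Set.Ioo (0:ℝ) (1/4)) (hεm : εmax ∈ Set.Ioo (0:ℝ) (1/2)) :
    ∃ c : ℝ, 0 < c ∧
      ∀ n : ℕ, 2 ≤ n → ∀ σ : ℝ, 0 < σ →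
        ∀ l u : (Fin n → ℝ) → ℝ, Measurable l → Measurable u → (∀ x, l x ≤ u x) →
          ∀ r : ℝ → ℝ, (∀ ε ∈ Set.Icc (0:ℝ) εmax, 0 < r ε) →
            (∀ (θ ε : ℝ), ε ∈ Set.Icc 0 εmax →
              ∀ Q : Measure ℝ, IsProbabilityMeasure Q →
                ENNReal.ofReal (1 - δ) ≤
                    iid n (huber θ σ ε Q) {x | l x ≤ θ ∧ θ ≤ u x} ∧
                ENNReal.ofReal (1 - δ) ≤
                    iid n (efron θ σ ε Q) {x | u x - l x ≤ r ε}) →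
            ∀ ε ∈ Set.Icc (0:ℝ) εmax,
              c * σ / Real.sqrt (Real.log n) ≤ r ε := by
  obtain ⟨hεm₀, hεm⟩ := hεm
  refine ⟨-log (1 - εmax) / 4, by linarith [log_neg (by linarith) (by linarith : 1 - εmax < 1)], ?_⟩
  intro n hn σ hσ l u hl hu _ r _ hcov ε hε
  set m := -log (1 - εmax) / 4 * σ / √(log n)
  set P := iid n (gauss m (σ ^ 2))
  obtain ⟨Q, hQ, hQP⟩ := exists_contamination_iid_le hσ hεm₀ hεm hn
  have hcover₀ : 1 - δ - 1 / 4 ≤ P.real {x | l x ≤ 0 ∧ 0 ≤ u x} := by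
    linarith [hQP {x | l x ≤ 0 ∧ 0 ≤ u x},
      le_measureReal_of_ofReal_le (hcov 0 εmax ⟨hεm₀.le, le_rfl⟩ Q hQ).1]
  have hcoverₘ : 1 - δ ≤ P.real {x | l x ≤ m ∧ m ≤ u x} := by
    have h := (hcov m 0 ⟨le_rfl, hεm₀.le⟩ (gauss 0 (σ ^ 2)) inferInstance).1
    rw [huber_zero] at h
    exact le_measureReal_of_ofReal_le h
  have hlength : 1 - δ ≤ P.real {x | u x - l x ≤ r ε} := by
    have h := (hcov m ε hε (Measure.dirac m) inferInstance).2
    rw [efron_dirac_self m σ hε.1 (by linarith [hε.2])] at h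
    exact le_measureReal_of_ofReal_le h
  have hm := abs_sub_le_of_coverage P hl hu hcover₀ hcoverₘ hlength (by linarith [hδ.2])
  rw [sub_zero] at hm
  exact (le_abs_self m).trans hm
end

section
/- Fix δ ∈ (0,1/4) and εmax ∈ (0,1/2). There exists a constant c > 0 depending only on δ and εmax such that the following holds for every integer n ≥ 1. Let (l,u) be any confidence-interval procedure on n samples and r : (0,∞) × [0,εmax] → (0,∞) any function such that for all θ ∈ ℝ, all σ > 0, all ε ∈ [0,εmax], and all probability measures Q on ℝ: (coverage over Huber's model) H_{θ,σ,ε,Q}^{⊗n}( {x : l(x) ≤ θ ≤ u(x)} ) ≥ 1 − δ, where H_{θ,σ,ε,Q} = (1−ε)·N(θ,σ²) + ε·Q; and (length over Efron's model) P_{θ,σ,ε,Q}^{⊗n}( {x : u(x) − l(x) ≤ r(σ,ε)} ) ≥ 1 − δ. Then r(σ,ε) ≥ c·σ for all σ > 0 and ε ∈ [0,εmax]. -/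
open MeasureTheory ProbabilityTheory Real
open scoped ENNReal NNReal

lemma exists_isProbabilityMeasure_eq_smul_add_smul {α : Type*} [MeasurableSpace α]
    {P G : Measure α} [IsProbabilityMeasure P] [IsProbabilityMeasure G] {ε : ℝ}
    (hε0 : 0 < ε) (hε1 : ε ≤ 1) (hle : ENNReal.ofReal (1 - ε) • G ≤ P) :
    ∃ Q : Measure α, IsProbabilityMeasure Q ∧
      P = ENNReal.ofReal (1 - ε) • G + ENNReal.ofReal ε • Q := by
  have hε : ENNReal.ofReal ε ≠ 0 := ENNReal.ofReal_ne_zero_iff.mpr hε0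
  have := G.smul_finite (ENNReal.ofReal_ne_top (r := 1 - ε))
  refine ⟨(ENNReal.ofReal ε)⁻¹ • (P - ENNReal.ofReal (1 - ε) • G), ⟨?_⟩, ?_⟩
  · have hrest : 1 - ENNReal.ofReal (1 - ε) = ENNReal.ofReal ε := by
      rw [← ENNReal.ofReal_one, ← ENNReal.ofReal_sub _ (by linarith), sub_sub_cancel]
    rw [Measure.smul_apply, Measure.sub_apply MeasurableSet.univ hle, Measure.smul_apply,
      measure_univ, measure_univ, smul_eq_mul, smul_eq_mul, mul_one, hrest,
      ENNReal.inv_mul_cancel hε ENNReal.ofReal_ne_top]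
  · rw [smul_smul, ENNReal.mul_inv_cancel hε ENNReal.ofReal_ne_top, one_smul, add_comm,
      Measure.sub_add_cancel_of_le hle]

lemma gaussianPDFReal_mul_le (θ x : ℝ) {v' v : ℝ≥0} (hv' : 0 < v') (hlt : v' < v) :
    gaussianPDFReal θ v' x * (√((v' : ℝ) / v) * rexp (-θ ^ 2 / (2 * ((v : ℝ) - v'))))
      ≤ gaussianPDFReal 0 v x := by
  have hv'r : (0 : ℝ) < v' := hv'
  have hd : (0 : ℝ) < (v : ℝ) - v' := sub_pos.mpr hlt
  have hvr : (0 : ℝ) < v := hv'r.trans hlt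
  have hexponent : -(x - θ) ^ 2 / (2 * v') + -θ ^ 2 / (2 * ((v : ℝ) - v'))
      ≤ -(x - 0) ^ 2 / (2 * v) := by
    rw [div_add_div _ _ (by positivity) (by positivity), div_le_div_iff₀ (by positivity)
      (by positivity)]
    nlinarith [sq_nonneg (((v : ℝ) - v') * x - v * θ), mul_pos hv'r hd, mul_pos hvr hd]
  have hconst : (√(2 * π * v'))⁻¹ * √((v' : ℝ) / v) = (√(2 * π * v))⁻¹ := by
    rw [Real.sqrt_div hv'r.le, Real.sqrt_mul (by positivity) (v' : ℝ),
      Real.sqrt_mul (by positivity) (v : ℝ)]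
    have : 0 < √(v' : ℝ) := Real.sqrt_pos.mpr hv'r
    field_simp
  calc gaussianPDFReal θ v' x * (√((v' : ℝ) / v) * rexp (-θ ^ 2 / (2 * ((v : ℝ) - v'))))
      = (√(2 * π * v))⁻¹ * rexp (-(x - θ) ^ 2 / (2 * v') + -θ ^ 2 / (2 * ((v : ℝ) - v'))) := by
        rw [gaussianPDFReal, ← hconst, Real.exp_add]; ring
    _ ≤ gaussianPDFReal 0 v x := by
        rw [gaussianPDFReal]; gcongr

lemma smul_gauss_le_gauss {θ ε v : ℝ} (hε0 : 0 < ε) (hε1 : ε < 1) (hv : 0 < v)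
    (hθ : θ ^ 2 ≤ -(ε * log (1 - ε)) * v) :
    ENNReal.ofReal (1 - ε) • gauss θ ((1 - ε) * v) ≤ gauss 0 v := by
  set v' := Real.toNNReal ((1 - ε) * v)
  have hv'r : (v' : ℝ) = (1 - ε) * v := Real.coe_toNNReal _ (by nlinarith)
  have hvr : (v.toNNReal : ℝ) = v := Real.coe_toNNReal _ hv.le
  have hv' : 0 < v' := Real.toNNReal_pos.mpr (by nlinarith)
  have hlt : v' < v.toNNReal := by rw [← NNReal.coe_lt_coe, hv'r, hvr]; nlinarith
  have hsqrt : √(1 - ε) * √(1 - ε) = 1 - ε := Real.mul_self_sqrt (by linarith)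
  have hexp : √(1 - ε) ≤ rexp (-θ ^ 2 / (2 * (v - (1 - ε) * v))) := by
    rw [Real.sqrt_eq_rpow, Real.rpow_def_of_pos (by linarith), Real.exp_le_exp,
      show v - (1 - ε) * v = ε * v by ring, le_div_iff₀ (by positivity)]
    linarith
  unfold gauss
  rw [gaussianReal_of_var_ne_zero _ hv'.ne', gaussianReal_of_var_ne_zero _ (hv'.trans hlt).ne',
    ← withDensity_smul _ (measurable_gaussianPDF _ _)]
  refine withDensity_mono (ae_of_all _ fun x => ?_)
  simp only [Pi.smul_apply, smul_eq_mul, gaussianPDF]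
  rw [← ENNReal.ofReal_mul (by linarith)]
  refine ENNReal.ofReal_le_ofReal (le_trans ?_ (gaussianPDFReal_mul_le θ x hv' hlt))
  rw [hv'r, hvr, mul_div_cancel_right₀ _ hv.ne']
  calc (1 - ε) * gaussianPDFReal θ v' x
      = gaussianPDFReal θ v' x * (√(1 - ε) * √(1 - ε)) := by rw [hsqrt, mul_comm]
    _ ≤ _ := by have := gaussianPDFReal_nonneg θ v' x; gcongr

lemma exists_huber_eq_gauss {θ σ ε : ℝ} (hε0 : 0 < ε) (hε1 : ε < 1) (hσ : 0 < σ)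
    (hθ : θ ^ 2 ≤ -(ε * log (1 - ε)) * σ ^ 2) :
    ∃ Q : Measure ℝ, IsProbabilityMeasure Q ∧
      huber θ (σ * √(1 - ε)) ε Q = gauss 0 (σ ^ 2) := by
  obtain ⟨Q, hQ, hdecomp⟩ := exists_isProbabilityMeasure_eq_smul_add_smul hε0 hε1.le
    (smul_gauss_le_gauss hε0 hε1 (by positivity) hθ)
  refine ⟨Q, hQ, ?_⟩
  rw [hdecomp, huber, mul_pow, Real.sq_sqrt (by linarith), mul_comm]

lemma efron_dirac (θ σ ε : ℝ) (hε0 : 0 ≤ ε) (hε1 : ε ≤ 1) :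
    efron θ σ ε (Measure.dirac θ) = gauss θ (σ ^ 2) := by
  have hconv : Measure.dirac θ ∗ gauss 0 (σ ^ 2) = gauss θ (σ ^ 2) := by
    rw [Measure.dirac_conv, gauss, gauss, show (θ + ·) = (· + θ) from funext (add_comm θ),
      gaussianReal_map_add_const, zero_add]
  rw [efron, hconv, ← add_smul, ← ENNReal.ofReal_add (by linarith) hε0, sub_add_cancel,
    ENNReal.ofReal_one, one_smul]

lemma nonempty_inter_inter_of_le_measure {Ω : Type*} [MeasurableSpace Ω] (P : Measure Ω)
    [IsProbabilityMeasure P] {A B C : Set Ω} {δ : ℝ} (hδ0 : 0 ≤ δ) (hδ : δ < 1 / 3)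
    (hA : MeasurableSet A) (hB : MeasurableSet B) (hC : MeasurableSet C)
    (hPA : ENNReal.ofReal (1 - δ) ≤ P A) (hPB : ENNReal.ofReal (1 - δ) ≤ P B)
    (hPC : ENNReal.ofReal (1 - δ) ≤ P C) :
    (A ∩ B ∩ C).Nonempty := by
  have hcompl : ∀ S, MeasurableSet S → ENNReal.ofReal (1 - δ) ≤ P S →
      P Sᶜ ≤ ENNReal.ofReal δ := by
    intro S hS hPS
    rw [prob_compl_eq_one_sub hS]
    calc 1 - P S ≤ 1 - ENNReal.ofReal (1 - δ) := tsub_le_tsub_left hPS 1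
      _ ≤ ENNReal.ofReal δ := by
        rw [tsub_le_iff_right, ← ENNReal.ofReal_one]
        exact (ENNReal.ofReal_add_le).trans' (by simp)
  by_contra hempty
  have : (1 : ℝ≥0∞) < 1 := calc
    1 = P (Aᶜ ∪ Bᶜ ∪ Cᶜ) := by
        rw [← Set.compl_inter, ← Set.compl_inter, Set.not_nonempty_iff_eq_empty.mp hempty,
          Set.compl_empty, measure_univ]
    _ ≤ P (Aᶜ ∪ Bᶜ) + P Cᶜ := measure_union_le _ _
    _ ≤ P Aᶜ + P Bᶜ + P Cᶜ := by gcongr; exact measure_union_le _ _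
    _ ≤ ENNReal.ofReal δ + ENNReal.ofReal δ + ENNReal.ofReal δ := by
        gcongr <;> apply hcompl <;> assumption
    _ = ENNReal.ofReal (δ + δ + δ) := by
        rw [ENNReal.ofReal_add (by positivity) hδ0, ENNReal.ofReal_add hδ0 hδ0]
    _ < 1 := ENNReal.ofReal_lt_one.mpr (by linarith)
  exact this.false

/-- No adaptation between Huber's and Efron's models, unknown variance (Theorem 6.1, part 2):
any procedure with variance-adaptive coverage over all Huber's models and length `r(σ,ε)`
over all Efron's models must satisfy `r(σ,ε) ≥ c·σ`. -/
theorem no_adaptation_unknown_variance (δ εmax : ℝ)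
    (hδ : δ ∈ Set.Ioo (0:ℝ) (1/4)) (hεm : εmax ∈ Set.Ioo (0:ℝ) (1/2)) :
    ∃ c : ℝ, 0 < c ∧
      ∀ n : ℕ, 1 ≤ n →
        ∀ l u : (Fin n → ℝ) → ℝ, Measurable l → Measurable u → (∀ x, l x ≤ u x) →
          ∀ r : ℝ → ℝ → ℝ,
            (∀ σ : ℝ, 0 < σ → ∀ ε ∈ Set.Icc (0:ℝ) εmax, 0 < r σ ε) →
            (∀ (θ σ ε : ℝ), 0 < σ → ε ∈ Set.Icc 0 εmax →
              ∀ Q : Measure ℝ, IsProbabilityMeasure Q →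
                ENNReal.ofReal (1 - δ) ≤
                    iid n (huber θ σ ε Q) {x | l x ≤ θ ∧ θ ≤ u x} ∧
                ENNReal.ofReal (1 - δ) ≤
                    iid n (efron θ σ ε Q) {x | u x - l x ≤ r σ ε}) →
            ∀ σ : ℝ, 0 < σ → ∀ ε ∈ Set.Icc (0:ℝ) εmax,
              c * σ ≤ r σ ε := by
  obtain ⟨hδ0, hδ1⟩ := hδ
  obtain ⟨hε0, hε1⟩ := hεm
  have hlog : log (1 - εmax) < 0 := Real.log_neg (by linarith) (by linarith)
  set c := √(-(εmax * log (1 - εmax)))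
  have hc : 0 < c := Real.sqrt_pos.mpr (by nlinarith)
  refine ⟨c, hc, fun n _ l u hl hu _ r _ hyp σ hσ ε hε => ?_⟩
  have hθ : (c * σ) ^ 2 ≤ -(εmax * log (1 - εmax)) * σ ^ 2 := by
    rw [mul_pow, Real.sq_sqrt (by nlinarith)]
  obtain ⟨Qplus, hQplus, hhuber_plus⟩ := exists_huber_eq_gauss hε0 (by linarith) hσ hθ
  obtain ⟨Qminus, hQminus, hhuber_minus⟩ :=
    exists_huber_eq_gauss hε0 (by linarith) hσ ((neg_sq _).trans_le hθ)
  have hσ' : 0 < σ * √(1 - εmax) := mul_pos hσ (Real.sqrt_pos.mpr (by linarith))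
  have hεmax : εmax ∈ Set.Icc 0 εmax := ⟨hε0.le, le_rfl⟩
  have hcover_plus := (hyp (c * σ) _ εmax hσ' hεmax Qplus hQplus).1
  have hcover_minus := (hyp (-(c * σ)) _ εmax hσ' hεmax Qminus hQminus).1
  have hshort := (hyp 0 σ ε hσ hε (Measure.dirac 0) inferInstance).2
  rw [hhuber_plus] at hcover_plus
  rw [hhuber_minus] at hcover_minus
  rw [efron_dirac 0 σ ε hε.1 (by linarith [hε.2])] at hshort
  have hcover_meas (θ : ℝ) : MeasurableSet {x | l x ≤ θ ∧ θ ≤ u x} :=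
    (measurableSet_le hl measurable_const).inter (measurableSet_le measurable_const hu)
  obtain ⟨x, ⟨⟨-, hxu⟩, hxl, -⟩, hxr⟩ := nonempty_inter_inter_of_le_measure _ hδ0.le
    (by linarith) (hcover_meas _) (hcover_meas _) (measurableSet_le (hu.sub hl) measurable_const)
    hcover_plus hcover_minus hshort
  have hlen : u x - l x ≤ r σ ε := hxr
  linarith [mul_pos hc hσ]
end

section
/- Let θ ∈ ℝ, σ > 0, ε ∈ [0,1/2), and let Q be a probability measure on ℝ. Let φ be the characteristic function of the Efron measure P_{θ,σ,ε,Q}, and for μ ∈ ℝ define Υ(t;μ) = 2·e^{−iμt + σ²t²/2}·φ(t) − 1 for t ∈ ℝ. Then μ = θ if and only if there exists a probability measure ν on ℝ whose characteristic function equals t ↦ Υ(t;μ). -/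
open MeasureTheory ProbabilityTheory Real
open scoped ENNReal NNReal

/-- Characteristic function of a measure on `ℝ`: `φ(t) = ∫ e^{itx} dP(x)`. -/
noncomputable def charFun' (P : Measure ℝ) (t : ℝ) : ℂ :=
  ∫ x, Complex.exp (Complex.I * t * x) ∂P

/-- Certified adversarial component (known variance):
`Υ(t;μ) = 2·e^{−iμt + σ²t²/2}·φ(t) − 1`. -/
noncomputable def UpsKnown (σ : ℝ) (φ : ℝ → ℂ) (t μ : ℝ) : ℂ :=
  2 * Complex.exp (-(Complex.I * (μ : ℂ) * (t : ℂ)) + ((σ : ℂ) ^ 2 * (t : ℂ) ^ 2 / 2))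
      * φ t - 1

/-!
Multiplying `φ` by the reciprocal `e^{σ²t²/2}` of the noise characteristic function gives
`Υ(t; μ) = 2(1-ε) e^{i(θ-μ)t} + 2ε e^{-iμt} φ_Q(t) - 1`. For `μ = θ` this is the characteristic
function of the mixture `(1-2ε) δ₀ + 2ε Q(· + θ)`. For `μ ≠ θ`, at `t = π / (θ - μ)` the first
term is `-2(1-ε)`, so `‖Υ(t; μ)‖ ≥ 3 - 4ε > 1`, which no characteristic function attains.
-/

open Complex

lemma isProbabilityMeasure_mixture {α : Type*} [MeasurableSpace α] {μ ν : Measure α}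
    [IsProbabilityMeasure μ] [IsProbabilityMeasure ν] {p : ℝ} (hp₀ : 0 ≤ p) (hp₁ : p ≤ 1) :
    IsProbabilityMeasure (ENNReal.ofReal (1 - p) • μ + ENNReal.ofReal p • ν) := by
  constructor
  simp only [Measure.add_apply, Measure.smul_apply, measure_univ, smul_eq_mul, mul_one]
  rw [← ENNReal.ofReal_add (by linarith) hp₀]
  simp

section CharFun

variable {E : Type*} [MeasurableSpace E] [NormedAddCommGroup E] [InnerProductSpace ℝ E]
  {μ ν : Measure E}

lemma integrable_cexp_inner_mul_I [OpensMeasurableSpace E] [IsFiniteMeasure μ] (t : E) :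
    Integrable (fun x ↦ cexp (inner ℝ x t * I)) μ :=
  (integrable_const (1 : ℝ)).mono (by fun_prop) (by simp)

lemma charFun_add_measure [OpensMeasurableSpace E] [IsFiniteMeasure μ] [IsFiniteMeasure ν]
    (t : E) : charFun (μ + ν) t = charFun μ t + charFun ν t :=
  integral_add_measure (integrable_cexp_inner_mul_I t) (integrable_cexp_inner_mul_I t)

lemma charFun_smul_measure (c : ℝ≥0∞) (t : E) :
    charFun (c • μ) t = c.toReal * charFun μ t := by
  rw [charFun_apply, integral_smul_measure, Complex.real_smul]; rfl

instance isProbabilityMeasure_map_sub_const [BorelSpace E] [IsProbabilityMeasure μ] (r : E) :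
    IsProbabilityMeasure (μ.map (· - r)) :=
  Measure.isProbabilityMeasure_map (by fun_prop)

lemma charFun_map_sub_const [BorelSpace E] (r t : E) :
    charFun (μ.map (· - r)) t = charFun μ t * cexp (-inner ℝ r t * I) := by
  simp_rw [sub_eq_add_neg, charFun_map_add_const, inner_neg_left, ofReal_neg]

lemma charFun_mixture [OpensMeasurableSpace E] [IsFiniteMeasure μ] [IsFiniteMeasure ν]
    {p : ℝ} (hp₀ : 0 ≤ p) (hp₁ : p ≤ 1) (t : E) :
    charFun (ENNReal.ofReal (1 - p) • μ + ENNReal.ofReal p • ν) t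
      = (1 - p) * charFun μ t + p * charFun ν t := by
  have := μ.smul_finite (ENNReal.ofReal_ne_top (r := 1 - p))
  have := ν.smul_finite (ENNReal.ofReal_ne_top (r := p))
  rw [charFun_add_measure, charFun_smul_measure, charFun_smul_measure,
    ENNReal.toReal_ofReal (by linarith), ENNReal.toReal_ofReal hp₀, ofReal_sub, ofReal_one]

end CharFun

lemma charFun'_eq_charFun (P : Measure ℝ) : charFun' P = charFun P := by
  ext t
  rw [charFun', charFun_apply_real]
  congr with x
  ring_nf

lemma charFun_gauss (m : ℝ) {v : ℝ} (hv : 0 ≤ v) (t : ℝ) :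
    charFun (gauss m v) t = cexp (t * m * I - v * t ^ 2 / 2) := by
  rw [gauss, charFun_gaussianReal, Real.coe_toNNReal _ hv]

instance isProbabilityMeasure_gauss (m v : ℝ) : IsProbabilityMeasure (gauss m v) := by
  rw [gauss]; infer_instance

lemma charFun_efron (θ σ : ℝ) {ε : ℝ} (hε₀ : 0 ≤ ε) (hε₁ : ε ≤ 1) (Q : Measure ℝ)
    [IsProbabilityMeasure Q] (t : ℝ) :
    charFun (efron θ σ ε Q) t
      = ((1 - ε) * cexp (t * θ * I) + ε * charFun Q t) * cexp (-(σ ^ 2 * t ^ 2 / 2)) := by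
  rw [efron, charFun_mixture hε₀ hε₁, charFun_conv, charFun_gauss _ (sq_nonneg σ),
    charFun_gauss _ (sq_nonneg σ)]
  push_cast
  simp only [mul_zero, zero_mul, zero_sub, sub_eq_add_neg (_ * I), Complex.exp_add]
  ring

lemma upsKnown_efron (θ σ : ℝ) {ε : ℝ} (hε₀ : 0 ≤ ε) (hε₁ : ε ≤ 1) (Q : Measure ℝ)
    [IsProbabilityMeasure Q] (t μ : ℝ) :
    UpsKnown σ (charFun (efron θ σ ε Q)) t μ
      = 2 * (1 - ε) * cexp (t * (θ - μ) * I) + 2 * ε * charFun (Q.map (· - μ)) t - 1 := by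
  rw [UpsKnown, charFun_efron θ σ hε₀ hε₁, charFun_map_sub_const,
    Real.inner_apply, ofReal_mul]
  have hgauss : cexp (-(I * μ * t) + σ ^ 2 * t ^ 2 / 2) * cexp (-(σ ^ 2 * t ^ 2 / 2))
      = cexp (-(μ * t) * I) := by
    rw [← Complex.exp_add]; ring_nf
  have hshift : cexp (-(μ * t) * I) * cexp (t * θ * I) = cexp (t * (θ - μ) * I) := by
    rw [← Complex.exp_add]; ring_nf
  linear_combination (2 * ((1 - ε) * cexp (t * θ * I) + ε * charFun Q t)) * hgauss
    + 2 * (1 - ε) * hshift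

lemma upsKnown_efron_self (θ σ : ℝ) {ε : ℝ} (hε₀ : 0 ≤ ε) (hε₁ : ε ≤ 1 / 2) (Q : Measure ℝ)
    [IsProbabilityMeasure Q] (t : ℝ) :
    UpsKnown σ (charFun (efron θ σ ε Q)) t θ
      = charFun (ENNReal.ofReal (1 - 2 * ε) • Measure.dirac 0
          + ENNReal.ofReal (2 * ε) • Q.map (· - θ)) t := by
  rw [upsKnown_efron θ σ hε₀ (by linarith), charFun_mixture (by linarith) (by linarith),
    charFun_dirac]
  simp only [sub_self, mul_zero, zero_mul, ofReal_zero, inner_zero_left, Complex.exp_zero]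
  push_cast
  ring

lemma eq_of_upsKnown_efron_eq_charFun (θ σ : ℝ) {ε : ℝ} (hε₀ : 0 ≤ ε) (hε₁ : ε < 1 / 2)
    (Q : Measure ℝ) [IsProbabilityMeasure Q] {μ : ℝ} (ν : Measure ℝ) [IsProbabilityMeasure ν]
    (h : ∀ t, charFun ν t = UpsKnown σ (charFun (efron θ σ ε Q)) t μ) : μ = θ := by
  by_contra hne
  set t := π / (θ - μ)
  have hrot : cexp (t * (θ - μ) * I) = -1 := by
    rw [← exp_pi_mul_I]
    congr 1
    have : (θ : ℂ) - μ ≠ 0 := by exact_mod_cast sub_ne_zero.2 (Ne.symm hne)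
    simp only [t]
    push_cast
    field_simp
  have hν : charFun ν t = -(3 - 2 * ε) + 2 * ε * charFun (Q.map (· - μ)) t := by
    rw [h, upsKnown_efron θ σ hε₀ (by linarith), hrot]
    ring
  have hQ : 2 * ε * ‖charFun (Q.map (· - μ)) t‖ ≤ 2 * ε :=
    mul_le_of_le_one_right (by linarith) (norm_charFun_le_one t)
  have : 3 - 2 * ε ≤ 1 + 2 * ε := calc
    3 - 2 * ε = ‖((3 - 2 * ε : ℝ) : ℂ)‖ := by rw [norm_real, Real.norm_of_nonneg (by linarith)]
    _ = ‖2 * ε * charFun (Q.map (· - μ)) t - charFun ν t‖ := by congr 1; rw [hν]; push_cast; ring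
    _ ≤ ‖2 * ε * charFun (Q.map (· - μ)) t‖ + ‖charFun ν t‖ := norm_sub_le _ _
    _ ≤ 1 + 2 * ε := by
      rw [norm_mul, norm_mul, Complex.norm_ofNat, norm_real, Real.norm_of_nonneg hε₀]
      linarith [norm_charFun_le_one (μ := ν) t]
  linarith

theorem true_candidate_known_variance_general (θ σ ε : ℝ)
    (hε : ε ∈ Set.Ico (0:ℝ) (1/2)) (Q : Measure ℝ) (hQ : IsProbabilityMeasure Q) (μ : ℝ) :
    μ = θ ↔
      ∃ ν : Measure ℝ, IsProbabilityMeasure ν ∧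
        ∀ t : ℝ, charFun' ν t = UpsKnown σ (charFun' (efron θ σ ε Q)) t μ := by
  obtain ⟨hε₀, hε₁⟩ := hε
  simp only [charFun'_eq_charFun]
  constructor
  · rintro rfl
    exact ⟨_, isProbabilityMeasure_mixture (by linarith) (by linarith),
      fun t ↦ (upsKnown_efron_self μ σ hε₀ hε₁.le Q t).symm⟩
  · rintro ⟨ν, hν, h⟩
    exact eq_of_upsKnown_efron_eq_charFun θ σ hε₀ hε₁ Q ν h

/-- Lemma 2.1: in the known-variance setting with `ε ∈ [0,1/2)`, a candidate `μ` equals the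
true `θ` if and only if `t ↦ Υ(t;μ)` is the characteristic function of a probability
measure. -/
theorem true_candidate_known_variance (θ σ ε : ℝ) (hσ : 0 < σ)
    (hε : ε ∈ Set.Ico (0:ℝ) (1/2)) (Q : Measure ℝ) (hQ : IsProbabilityMeasure Q) (μ : ℝ) :
    μ = θ ↔
      ∃ ν : Measure ℝ, IsProbabilityMeasure ν ∧
        ∀ t : ℝ, charFun' ν t = UpsKnown σ (charFun' (efron θ σ ε Q)) t μ :=
  true_candidate_known_variance_general θ σ ε hε Q hQ μ
end

section
/- For every b ∈ [−π, π] and every ε ∈ [0, 1/2): |−1 + 2(1−ε)·e^{−ib}| − 2ε ≥ 1 + 2(b/π)² − 4ε. In particular, the Euclidean distance from 0 to the closed disk in ℂ of center −1 + 2(1−ε)·e^{−ib} and radius 2ε is at least 1 + 2(b/π)² − 4ε. -/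
open Real

/-!
Writing `z = -1 + 2t e^{-ib}` with `t = 1 - ε`, one has `‖z‖² = 1 - 4t cos b + 4t²`, and Jordan's
bound `cos b ≤ 1 - 2(b/π)²` on `[-π, π]` gives `‖z‖² ≥ (2t - 1)² + 8t(b/π)²`. This dominates
`(2t - 1 + 2(b/π)²)²` because the difference is `4q(1 - q)` with `q = (b/π)² ∈ [0, 1]`. The disk
of radius `2ε` around `z` then stays at distance at least `‖z‖ - 2ε` from the origin.
-/

theorem Metric.dist_sub_le_infDist_closedBall {X : Type*} [PseudoMetricSpace X] (x z : X)
    {r : ℝ} (hr : 0 ≤ r) : dist x z - r ≤ Metric.infDist x (Metric.closedBall z r) := by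
  rw [Metric.le_infDist ⟨z, Metric.mem_closedBall_self hr⟩]
  intro y hy
  linarith [dist_triangle x y z, Metric.mem_closedBall.mp hy]

theorem norm_neg_one_add_mul_exp_neg_I_mul_sq (c b : ℝ) :
    ‖-1 + c * Complex.exp (-(Complex.I * b))‖ ^ 2 = 1 - 2 * c * cos b + c ^ 2 := by
  have hexp : Complex.exp (-(Complex.I * b)) = cos b - sin b * Complex.I := by
    rw [show -(Complex.I * b) = ((-b : ℝ) : ℂ) * Complex.I by push_cast; ring,
      Complex.exp_mul_I, ← Complex.ofReal_cos, ← Complex.ofReal_sin, cos_neg, sin_neg]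
    push_cast; ring
  have hz : -1 + c * Complex.exp (-(Complex.I * b)) =
      ((-1 + c * cos b : ℝ) : ℂ) + ((-(c * sin b) : ℝ) : ℂ) * Complex.I := by
    rw [hexp]; push_cast; ring
  rw [← Complex.normSq_eq_norm_sq, hz, Complex.normSq_add_mul_I]
  linear_combination c ^ 2 * sin_sq_add_cos_sq b

theorem two_mul_sub_one_add_sq_div_pi_le_norm {t b : ℝ} (ht : 0 ≤ t) (hb : |b| ≤ π) :
    2 * t - 1 + 2 * (b / π) ^ 2 ≤ ‖-1 + 2 * t * Complex.exp (-(Complex.I * b))‖ := by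
  set q := (b / π) ^ 2 with hq
  have hq1 : q ≤ 1 := by
    rw [hq, div_pow, div_le_one (by positivity), ← sq_abs]
    exact pow_le_pow_left₀ (abs_nonneg b) hb 2
  have hcos : cos b ≤ 1 - 2 * q := by
    have := cos_le_one_sub_mul_cos_sq hb
    rw [hq, div_pow]; linarith [show 2 / π ^ 2 * b ^ 2 = 2 * (b ^ 2 / π ^ 2) by ring]
  have hsq : (2 * t - 1 + 2 * q) ^ 2 ≤ ‖-1 + 2 * t * Complex.exp (-(Complex.I * b))‖ ^ 2 := by
    have := norm_neg_one_add_mul_exp_neg_I_mul_sq (2 * t) b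
    push_cast at this
    rw [this]
    nlinarith [mul_le_mul_of_nonneg_left hcos ht, mul_nonneg (sq_nonneg (b / π)) (sub_nonneg.2 hq1)]
  exact (abs_le_of_sq_le_sq' hsq (norm_nonneg _)).2

/-- Quadratic gap (Lemma 3.3): for `b ∈ [−π,π]` and `ε ∈ [0,1/2)`,
`|−1 + 2(1−ε)e^{−ib}| − 2ε ≥ 1 + 2(b/π)² − 4ε`; in particular the distance from `0` to the
closed disk of center `−1 + 2(1−ε)e^{−ib}` and radius `2ε` is at least `1 + 2(b/π)² − 4ε`. -/
theorem quadratic_gap (b ε : ℝ) (hb : b ∈ Set.Icc (-π) π)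
    (hε : ε ∈ Set.Ico (0:ℝ) (1/2)) :
    1 + 2 * (b / π) ^ 2 - 4 * ε ≤
        ‖-1 + 2 * (1 - (ε : ℂ)) * Complex.exp (-(Complex.I * (b : ℂ)))‖ - 2 * ε ∧
    1 + 2 * (b / π) ^ 2 - 4 * ε ≤
        Metric.infDist (0 : ℂ)
          (Metric.closedBall (-1 + 2 * (1 - (ε : ℂ)) * Complex.exp (-(Complex.I * (b : ℂ))))
            (2 * ε)) := by
  obtain ⟨hε0, hε1⟩ := hε
  have hnorm := two_mul_sub_one_add_sq_div_pi_le_norm (t := 1 - ε) (by linarith) (abs_le.2 hb)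
  push_cast at hnorm
  have hgap : 1 + 2 * (b / π) ^ 2 - 4 * ε ≤
      ‖-1 + 2 * (1 - (ε : ℂ)) * Complex.exp (-(Complex.I * (b : ℂ)))‖ - 2 * ε := by
    linarith
  refine ⟨hgap, hgap.trans ?_⟩
  simpa using Metric.dist_sub_le_infDist_closedBall (0 : ℂ)
    (-1 + 2 * (1 - (ε : ℂ)) * Complex.exp (-(Complex.I * (b : ℂ)))) (by linarith : 0 ≤ 2 * ε)
end

section
/- Let K be a positive integer divisible by 4 and let x ∈ (0,1). Then: (a) | Σ_{k=0}^{K} (−1)^{K−k} · C(K,k) / (k − K/2 + x) − (1/x)·C(K,K/2) | ≤ ((1 − πx·cot(πx))/x) · C(K,K/2); (b) if moreover x ∈ (0,1/4), then (π/4)/x · C(K,K/2) ≤ Σ_{k=0}^{K} (−1)^{K−k} · C(K,k) / (k − K/2 + x) ≤ (2 − π/4)/x · C(K,K/2). -/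
/-!
Write `K = 2M` and `t = πx`. The sum is the `K`-th forward difference of `y ↦ 1/y` at `x - M`,
i.e. `K! / ∏_{j=0}^{K} (x - M + j)`; pairing the factors `x - i` and `x + i` turns the product
into `(-1)^M (M!)² x Q` with `Q = ∏_{i=1}^{M} (1 - x²/i²)`, so for `M` even the sum is
`C(K,M) / (x Q)`. Every factor of `Q` lies in `(0,1]`, so the tail of Euler's product
`sin t = t ∏_{i≥1} (1 - x²/i²)` gives `1 ≤ 1/Q ≤ t / sin t`. Both parts then follow from
`t / sin t ≤ 2 - t cot t`, which is `t (1 + cos t) ≤ 2 sin t`, i.e. `t/2 ≤ tan (t/2)`, and from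
`t / sin t ≤ 2 - π/4` for `t ≤ π/4`, by `sin t > t - t³/6`.
-/

open Real Finset

open Nat in
theorem fwdDiff_iter_inv (n : ℕ) {y : ℝ} (hy : ∀ j ≤ n, y + j ≠ 0) :
    (fwdDiff 1)^[n] (fun t : ℝ ↦ t⁻¹) y = (-1) ^ n * n ! / ∏ j ∈ range (n + 1), (y + j) := by
  induction n generalizing y with
  | zero => simp
  | succ n ih =>
    have hy₀ : ∀ j ≤ n, y + j ≠ 0 := fun j hj ↦ hy j (by omega)
    have hy₁ : ∀ j ≤ n, y + 1 + j ≠ 0 := fun j hj ↦ by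
      convert hy (j + 1) (by omega) using 1; push_cast; ring
    have hlast : y + (n + 1) ≠ 0 := by exact_mod_cast hy (n + 1) le_rfl
    have hP₀ : ∏ j ∈ range (n + 1), (y + j) ≠ 0 :=
      prod_ne_zero_iff.2 fun j hj ↦ hy₀ j (by simp at hj; omega)
    have hP₁ : ∏ j ∈ range (n + 1), (y + 1 + j) ≠ 0 :=
      prod_ne_zero_iff.2 fun j hj ↦ hy₁ j (by simp at hj; omega)
    have hsucc :
        ∏ j ∈ range (n + 2), (y + j) = (∏ j ∈ range (n + 1), (y + j)) * (y + (n + 1)) := by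
      rw [prod_range_succ]; push_cast; ring
    have hsucc' : ∏ j ∈ range (n + 2), (y + j) = (∏ j ∈ range (n + 1), (y + 1 + j)) * y := by
      rw [prod_range_succ']
      simp only [Nat.cast_add, Nat.cast_one, Nat.cast_zero, add_zero]
      exact congrArg (· * y) (prod_congr rfl fun j _ ↦ by ring)
    rw [Function.iterate_succ_apply', fwdDiff, ih hy₁, ih hy₀, hsucc, div_sub_div _ _ hP₁ hP₀,
      div_eq_div_iff (mul_ne_zero hP₁ hP₀) (mul_ne_zero hP₀ hlast)]
    push_cast [factorial_succ]
    linear_combination -(-1) ^ n * (n ! : ℝ) * (∏ j ∈ range (n + 1), (y + j)) *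
      hsucc'.symm.trans hsucc

open Nat in
theorem sum_alternating_choose_div (n : ℕ) {y : ℝ} (hy : ∀ j ≤ n, y + j ≠ 0) :
    ∑ k ∈ range (n + 1), (-1 : ℝ) ^ (n - k) * n.choose k / (y + k) =
      (-1) ^ n * n ! / ∏ j ∈ range (n + 1), (y + j) := by
  rw [← fwdDiff_iter_inv n hy, fwdDiff_iter_eq_sum_shift]
  simp [div_eq_mul_inv]

open Nat in
theorem prod_range_sub_add (x : ℝ) (M : ℕ) :
    ∏ j ∈ range (2 * M + 1), (x - M + j) =
      (-1) ^ M * (M ! : ℝ) ^ 2 * x * ∏ i ∈ range M, (1 - x ^ 2 / ((i : ℝ) + 1) ^ 2) := by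
  induction M with
  | zero => simp
  | succ M ih =>
    rw [show 2 * (M + 1) + 1 = 2 * M + 1 + 1 + 1 by ring, prod_range_succ, prod_range_succ',
      prod_congr rfl fun j _ ↦ show x - ((M + 1 : ℕ) : ℝ) + ((j + 1 : ℕ) : ℝ) = x - M + j by
        push_cast; ring, ih, prod_range_succ, factorial_succ]
    have : (M : ℝ) + 1 ≠ 0 := by positivity
    push_cast
    field_simp
    ring

open Nat in
theorem sum_alternating_choose_div_centered (M : ℕ) {x : ℝ} (hx : ∀ n : ℤ, x ≠ n) :
    ∑ k ∈ range (2 * M + 1),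
        (-1 : ℝ) ^ (2 * M - k) * (2 * M).choose k / ((k : ℝ) - ((2 * M : ℕ) : ℝ) / 2 + x) =
      (2 * M).choose M / ((-1) ^ M * x * ∏ i ∈ range M, (1 - x ^ 2 / ((i : ℝ) + 1) ^ 2)) := by
  have hy : ∀ j ≤ 2 * M, x - M + j ≠ 0 := fun j _ h ↦ hx (M - j) (by push_cast; linarith)
  have hM : (M ! : ℝ) ≠ 0 := by positivity
  have hchoose : ((2 * M) ! : ℝ) = (2 * M).choose M * M ! ^ 2 := by
    rw [← Nat.choose_mul_factorial_mul_factorial (by omega : M ≤ 2 * M), two_mul,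
      Nat.add_sub_cancel]
    push_cast; ring
  calc _ = ∑ k ∈ range (2 * M + 1), (-1 : ℝ) ^ (2 * M - k) * (2 * M).choose k / (x - M + k) :=
        sum_congr rfl fun k _ ↦ by push_cast; ring_nf
    _ = _ := by
      rw [sum_alternating_choose_div _ hy, prod_range_sub_add, hchoose, pow_mul, neg_one_sq,
        one_pow]
      field_simp

theorem one_sub_sq_div_succ_sq_mem_Ioc {x : ℝ} (hx : |x| < 1) (j : ℕ) :
    1 - x ^ 2 / ((j : ℝ) + 1) ^ 2 ∈ Set.Ioc 0 1 := by
  have hj : (1 : ℝ) ≤ ((j : ℝ) + 1) ^ 2 := one_le_pow₀ (by linarith [j.cast_nonneg (α := ℝ)])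
  have hx2 : x ^ 2 < 1 := (sq_lt_one_iff_abs_lt_one x).2 hx
  constructor
  · rw [sub_pos, div_lt_one (by positivity)]; linarith
  · simp only [sub_le_self_iff]; positivity

theorem sin_pi_mul_le_mul_prod {x : ℝ} (hx₀ : 0 ≤ x) (hx₁ : x < 1) (n : ℕ) :
    sin (π * x) ≤ π * x * ∏ j ∈ range n, (1 - x ^ 2 / ((j : ℝ) + 1) ^ 2) := by
  have hx' : |x| < 1 := abs_lt.2 ⟨by linarith, hx₁⟩
  refine Antitone.le_of_tendsto (antitone_nat_of_succ_le fun n ↦ ?_) (tendsto_euler_sin_prod x) n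
  have hfac := one_sub_sq_div_succ_sq_mem_Ioc hx' n
  rw [prod_range_succ, ← mul_assoc]
  exact mul_le_of_le_one_right (mul_nonneg (by positivity)
    (prod_nonneg fun j _ ↦ (one_sub_sq_div_succ_sq_mem_Ioc hx' j).1.le)) hfac.2

theorem one_le_inv_prod {x : ℝ} (hx : |x| < 1) (n : ℕ) :
    1 ≤ (∏ j ∈ range n, (1 - x ^ 2 / ((j : ℝ) + 1) ^ 2))⁻¹ :=
  one_le_inv₀ (prod_pos fun j _ ↦ (one_sub_sq_div_succ_sq_mem_Ioc hx j).1) |>.2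
    (prod_le_one (fun j _ ↦ (one_sub_sq_div_succ_sq_mem_Ioc hx j).1.le)
      fun j _ ↦ (one_sub_sq_div_succ_sq_mem_Ioc hx j).2)

theorem inv_prod_le_div_sin {x : ℝ} (hx₀ : 0 < x) (hx₁ : x < 1) (n : ℕ) :
    (∏ j ∈ range n, (1 - x ^ 2 / ((j : ℝ) + 1) ^ 2))⁻¹ ≤ π * x / sin (π * x) := by
  have hQ : 0 < ∏ j ∈ range n, (1 - x ^ 2 / ((j : ℝ) + 1) ^ 2) :=
    prod_pos fun j _ ↦ (one_sub_sq_div_succ_sq_mem_Ioc (abs_lt.2 ⟨by linarith, hx₁⟩) j).1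
  have hs : 0 < sin (π * x) := sin_pos_of_pos_of_lt_pi (by positivity) (by nlinarith [pi_pos])
  rw [inv_eq_one_div, div_le_div_iff₀ hQ hs, one_mul]
  exact sin_pi_mul_le_mul_prod hx₀.le hx₁ n

theorem mul_one_add_cos_le_two_mul_sin {t : ℝ} (ht₀ : 0 < t) (htπ : t < π) :
    t * (1 + cos t) ≤ 2 * sin t := by
  have hcos : 0 < cos (t / 2) := cos_pos_of_mem_Ioo ⟨by linarith, by linarith⟩
  have htan : t / 2 * cos (t / 2) < sin (t / 2) := by
    rw [← lt_div_iff₀ hcos, ← tan_eq_sin_div_cos]; exact lt_tan (by linarith) (by linarith)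
  have hsin : sin t = 2 * sin (t / 2) * cos (t / 2) := by rw [← sin_two_mul]; ring_nf
  have hcos' : 1 + cos t = 2 * cos (t / 2) ^ 2 := by rw [cos_sq]; ring_nf
  rw [hsin, hcos']
  nlinarith

theorem div_sin_le_two_sub_mul_cot {t : ℝ} (ht₀ : 0 < t) (htπ : t < π) :
    t / sin t ≤ 2 - t * cot t := by
  have hs : 0 < sin t := sin_pos_of_pos_of_lt_pi ht₀ htπ
  rw [cot_eq_cos_div_sin, le_sub_iff_add_le, ← mul_div_assoc, ← add_div, div_le_iff₀ hs]
  linarith [mul_one_add_cos_le_two_mul_sin ht₀ htπ]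

theorem div_sin_le_two_sub_pi_div_four {t : ℝ} (ht₀ : 0 < t) (ht : t ≤ π / 4) :
    t / sin t ≤ 2 - π / 4 := by
  have hπ := pi_lt_d2
  have hs : 0 < sin t := sin_pos_of_pos_of_lt_pi ht₀ (by linarith [pi_pos])
  have ht1 : t < 1 := by linarith
  have hc : 1 ≤ (2 - π / 4) * (1 - t ^ 2 / 6) := by nlinarith
  rw [div_le_iff₀ hs]
  calc t ≤ t * ((2 - π / 4) * (1 - t ^ 2 / 6)) := le_mul_of_one_le_right ht₀.le hc
    _ = (2 - π / 4) * (t - t ^ 3 / 6) := by ring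
    _ ≤ (2 - π / 4) * sin t :=
        mul_le_mul_of_nonneg_left (sin_gt_sub_cube ht₀).le (by linarith)

theorem control_alternation_general (K : ℕ) (h4 : 4 ∣ K)
    (x : ℝ) (hx : x ∈ Set.Ioo (0:ℝ) 1) :
    |(∑ k ∈ Finset.range (K + 1),
        (-1 : ℝ) ^ (K - k) * (Nat.choose K k : ℝ) / ((k : ℝ) - (K : ℝ) / 2 + x)) -
      (1 / x) * (Nat.choose K (K / 2) : ℝ)| ≤
        ((1 - π * x * Real.cot (π * x)) / x) * (Nat.choose K (K / 2) : ℝ) ∧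
    (x < 1 / 4 →
      (π / 4) / x * (Nat.choose K (K / 2) : ℝ) ≤
        (∑ k ∈ Finset.range (K + 1),
          (-1 : ℝ) ^ (K - k) * (Nat.choose K k : ℝ) / ((k : ℝ) - (K : ℝ) / 2 + x)) ∧
      (∑ k ∈ Finset.range (K + 1),
          (-1 : ℝ) ^ (K - k) * (Nat.choose K k : ℝ) / ((k : ℝ) - (K : ℝ) / 2 + x)) ≤
        (2 - π / 4) / x * (Nat.choose K (K / 2) : ℝ)) := by
  obtain ⟨m, rfl⟩ := h4
  obtain ⟨hx₀, hx₁⟩ := hx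
  have hx_int : ∀ n : ℤ, x ≠ n := fun n h ↦ by
    have h₀ : (0 : ℝ) < n := h ▸ hx₀
    have h₁ : (n : ℝ) < 1 := h ▸ hx₁
    norm_cast at h₀ h₁; omega
  rw [show 4 * m = 2 * (2 * m) by ring, Nat.mul_div_cancel_left _ two_pos,
    sum_alternating_choose_div_centered _ hx_int, pow_mul, neg_one_sq, one_pow, one_mul,
    div_mul_eq_div_div, div_eq_mul_inv (_ / x)]
  set C : ℝ := ((2 * (2 * m)).choose (2 * m) : ℝ)
  set r := (∏ i ∈ range (2 * m), (1 - x ^ 2 / ((i : ℝ) + 1) ^ 2))⁻¹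
  have hr₁ : 1 ≤ r := one_le_inv_prod (abs_lt.2 ⟨by linarith, hx₁⟩) _
  have hr : r ≤ π * x / sin (π * x) := inv_prod_le_div_sin hx₀ hx₁ _
  have hC : 0 ≤ C / x := by positivity
  have hCr : C / x ≤ C / x * r := le_mul_of_one_le_right hC hr₁
  refine ⟨?_, fun hx4 ↦ ⟨?_, ?_⟩⟩
  · have hcot := div_sin_le_two_sub_mul_cot (t := π * x) (by positivity) (by nlinarith [pi_pos])
    rw [abs_of_nonneg (by rw [one_div_mul_eq_div]; linarith)]
    calc C / x * r - 1 / x * C = C / x * (r - 1) := by ring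
      _ ≤ C / x * (1 - π * x * cot (π * x)) := mul_le_mul_of_nonneg_left (by linarith) hC
      _ = _ := by ring
  · calc π / 4 / x * C ≤ C / x := by
          rw [div_mul_eq_mul_div, div_le_div_iff_of_pos_right hx₀]
          exact mul_le_of_le_one_left (by positivity) (by linarith [pi_le_four])
      _ ≤ C / x * r := hCr
  · have hquarter :=
      div_sin_le_two_sub_pi_div_four (t := π * x) (by positivity) (by nlinarith [pi_pos])
    calc C / x * r ≤ C / x * (2 - π / 4) := by gcongr; linarith
      _ = _ := by ring

/-- Control of the alternating binomial sum (Lemma D.6): for `K` a positive multiple of 4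
and `x ∈ (0,1)`,
(a) `|Σ_{k=0}^{K} (−1)^{K−k} C(K,k)/(k − K/2 + x) − C(K,K/2)/x|
       ≤ ((1 − πx·cot(πx))/x)·C(K,K/2)`;
(b) if moreover `x ∈ (0,1/4)`, the sum lies between `(π/4)/x·C(K,K/2)` and
`(2 − π/4)/x·C(K,K/2)`. -/
theorem control_alternation (K : ℕ) (hK : 0 < K) (h4 : 4 ∣ K)
    (x : ℝ) (hx : x ∈ Set.Ioo (0:ℝ) 1) :
    |(∑ k ∈ Finset.range (K + 1),
        (-1 : ℝ) ^ (K - k) * (Nat.choose K k : ℝ) / ((k : ℝ) - (K : ℝ) / 2 + x)) -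
      (1 / x) * (Nat.choose K (K / 2) : ℝ)| ≤
        ((1 - π * x * Real.cot (π * x)) / x) * (Nat.choose K (K / 2) : ℝ) ∧
    (x < 1 / 4 →
      (π / 4) / x * (Nat.choose K (K / 2) : ℝ) ≤
        (∑ k ∈ Finset.range (K + 1),
          (-1 : ℝ) ^ (K - k) * (Nat.choose K k : ℝ) / ((k : ℝ) - (K : ℝ) / 2 + x)) ∧
      (∑ k ∈ Finset.range (K + 1),
          (-1 : ℝ) ^ (K - k) * (Nat.choose K k : ℝ) / ((k : ℝ) - (K : ℝ) / 2 + x)) ≤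
        (2 - π / 4) / x * (Nat.choose K (K / 2) : ℝ)) :=
  control_alternation_general K h4 x hx
end
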